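/- For block decomposable ℝ^op×ℝ-indexed modules M and N, every morphism from M^⋆ to N^† is zero whenever (⋆,†) is one of the pairs (o,co), (o,oc), (o,c), (co,oc), (co,c), (oc,co), (oc,c). -/

import Mathlib

open scoped DirectSum ENNReal

namespace PersStab

/-- A persistence module indexed by a preordered set `P`, with values in
`K`-vector spaces. -/
structure PersMod (K : Type) [Field K] (P : Type) [Preorder P] where
  V : P → Type
  [acg : ∀ a, AddCommGroup (V a)]
  [mod : ∀ a, Module K (V a)]
  map : ∀ {a b : P}, a ≤ b → (V a →ₗ[K] V b)
  map_id : ∀ a : P, map (le_refl a) = LinearMap.id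
  map_comp : ∀ {a b c : P} (h₁ : a ≤ b) (h₂ : b ≤ c),
    map (h₁.trans h₂) = (map h₂).comp (map h₁)

attribute [instance] PersMod.acg PersMod.mod

variable {K : Type} [Field K] {P : Type} [Preorder P]

/-- Pointwise finite dimensional. -/
def PersMod.pfd (M : PersMod K P) : Prop := ∀ a, FiniteDimensional K (M.V a)

/-- A morphism of persistence modules (a natural transformation). -/
structure PersHom (M N : PersMod K P) where
  app : ∀ a, M.V a →ₗ[K] N.V a
  natural : ∀ {a b : P} (h : a ≤ b), (app b).comp (M.map h) = (N.map h).comp (app a)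

/-- An isomorphism of persistence modules. -/
structure PersIso (M N : PersMod K P) where
  e : ∀ a, M.V a ≃ₗ[K] N.V a
  natural : ∀ {a b : P} (h : a ≤ b) (m : M.V a), e b (M.map h m) = N.map h (e a m)

/-- Convexity: the second defining property of an interval in a poset. -/
def IsConvexIn (J : Set P) : Prop :=
  ∀ ⦃a b c : P⦄, a ∈ J → c ∈ J → a ≤ b → b ≤ c → b ∈ J

/-- Connectivity: the third defining property of an interval in a poset:
any two points are joined by a finite zigzag of comparable points inside `J`. -/
def IsConnectedIn (J : Set P) : Prop :=
  ∀ a ∈ J, ∀ c ∈ J, ∃ (n : ℕ) (f : Fin (n + 1) → P),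
    f 0 = a ∧ f (Fin.last n) = c ∧ (∀ k, f k ∈ J) ∧
    ∀ k : Fin n, f k.castSucc ≤ f k.succ ∨ f k.succ ≤ f k.castSucc

/-- An interval in a poset: nonempty, convex and connected. -/
structure IsInterval (J : Set P) : Prop where
  nonempty : J.Nonempty
  convex : IsConvexIn J
  connected : IsConnectedIn J

-- The structure map of an interval module: the identity `K → K` if the source
-- lies in the interval, and `0` otherwise.
open Classical in
noncomputable def ivMap (K : Type) [Field K] (J : Set P) (a c : P) :
    (PLift (a ∈ J) → K) →ₗ[K] (PLift (c ∈ J) → K) where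
  toFun v _ := if h : a ∈ J then v ⟨h⟩ else 0
  map_add' u v := by
    funext hc
    by_cases h : a ∈ J <;> simp [h]
  map_smul' r v := by
    funext hc
    by_cases h : a ∈ J <;> simp [h]

/-- The interval module `I^J` of a convex set `J`: one-dimensional (a copy of `K`)
at points of `J`, zero elsewhere, with identity internal maps inside `J`. -/
noncomputable def intervalModule (K : Type) [Field K] (J : Set P) (hJ : IsConvexIn J) :
    PersMod K P where
  V a := PLift (a ∈ J) → K
  map {a c} _ := ivMap K J a c
  map_id a := by
    refine LinearMap.ext fun v => funext fun hc => ?_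
    obtain ⟨hc⟩ := hc
    simp only [ivMap, LinearMap.coe_mk, AddHom.coe_mk, LinearMap.id_coe, id_eq]
    rw [dif_pos hc]
  map_comp {a b c} h₁ h₂ := by
    refine LinearMap.ext fun v => funext fun hc => ?_
    simp only [ivMap, LinearMap.coe_mk, AddHom.coe_mk, LinearMap.coe_comp,
      Function.comp_apply]
    by_cases ha : a ∈ J
    · have hb : b ∈ J := hJ ha hc.down h₁ h₂
      simp [ha, hb]
    · simp [ha]

/-- A decomposition of the persistence module `M` as a direct sum of interval
modules `I^{B i}`, `i : ι`, where all the sets `B i` satisfy the predicate `pred`.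
The multiset `{B i | i : ι}` is the barcode of `M`. -/
structure DecompOver (pred : Set P → Prop) (M : PersMod K P) where
  ι : Type
  B : ι → Set P
  mem : ∀ i, pred (B i)
  equiv : ∀ a : P, M.V a ≃ₗ[K] (Π₀ i : ι, (PLift (a ∈ B i) → K))
  natural : ∀ {a c : P} (h : a ≤ c) (m : M.V a),
    equiv c (M.map h m) =
      DFinsupp.mapRange.linearMap (fun i => ivMap K (B i) a c) (equiv a m)

/-- A matching between two multisets, presented as indexed families: a bijection
between a subset (the coimage) of the index set `ι` and a subset (the image) of
the index set `κ`. -/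
structure Matching (ι κ : Type) : Type where
  R : ι → κ → Prop
  functional : ∀ {i j j'}, R i j → R i j' → j = j'
  injective : ∀ {i i' j}, R i j → R i' j → i = i'

section Shift

variable (sh : ℝ → P → P)

/-- `M` is `δ`-trivial (with respect to the shift `sh`): all internal maps
from `p` to the `δ`-shift of `p` vanish. -/
def ETrivial (M : PersMod K P) (δ : ℝ) : Prop :=
  ∀ (p : P) (h : p ≤ sh δ p), M.map h = 0

/-- The data `(f, g)` is an `ε`-interleaving between `M` and `N`:
`f : M → N(ε)` and `g : N → M(ε)` are natural, and the two composites agree with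
the `2ε`-shift morphisms of `M` and `N`. -/
structure IsInterleaving (ε : ℝ) (M N : PersMod K P)
    (f : ∀ p, M.V p →ₗ[K] N.V (sh ε p)) (g : ∀ p, N.V p →ₗ[K] M.V (sh ε p)) : Prop where
  nat_f : ∀ {p q : P} (h : p ≤ q) (h' : sh ε p ≤ sh ε q),
    (f q).comp (M.map h) = (N.map h').comp (f p)
  nat_g : ∀ {p q : P} (h : p ≤ q) (h' : sh ε p ≤ sh ε q),
    (g q).comp (N.map h) = (M.map h').comp (g p)
  gf : ∀ (p : P) (h : p ≤ sh ε (sh ε p)), (g (sh ε p)).comp (f p) = M.map h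
  fg : ∀ (p : P) (h : p ≤ sh ε (sh ε p)), (f (sh ε p)).comp (g p) = N.map h

/-- `M` and `N` are `ε`-interleaved. -/
def Interleaved (ε : ℝ) (M N : PersMod K P) : Prop :=
  0 ≤ ε ∧ ∃ f g, IsInterleaving sh ε M N f g

/-- The interleaving distance, valued in `ℝ≥0∞`. -/
noncomputable def dI (M N : PersMod K P) : ℝ≥0∞ :=
  ⨅ ε : {e : ℝ // Interleaved sh e M N}, ENNReal.ofReal ε.1

/-- `σ` is an `ε`-matching between the barcodes `{A i}` and `{C j}`:
every interval of either barcode which is not `2ε`-trivial is matched, and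
matched intervals have `ε`-interleaved interval modules. -/
def IsEpsMatching (K : Type) [Field K] (ε : ℝ) {ι κ : Type}
    (A : ι → Set P) (hA : ∀ i, IsConvexIn (A i))
    (C : κ → Set P) (hC : ∀ j, IsConvexIn (C j)) (σ : Matching ι κ) : Prop :=
  (∀ i, ¬ ETrivial sh (intervalModule K (A i) (hA i)) (2 * ε) → ∃ j, σ.R i j) ∧
  (∀ j, ¬ ETrivial sh (intervalModule K (C j) (hC j)) (2 * ε) → ∃ i, σ.R i j) ∧
  (∀ i j, σ.R i j →
    Interleaved sh ε (intervalModule K (A i) (hA i)) (intervalModule K (C j) (hC j)))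

/-- The bottleneck distance between two barcodes, valued in `ℝ≥0∞`. -/
noncomputable def dB (K : Type) [Field K] {ι κ : Type}
    (A : ι → Set P) (hA : ∀ i, IsConvexIn (A i))
    (C : κ → Set P) (hC : ∀ j, IsConvexIn (C j)) : ℝ≥0∞ :=
  ⨅ e : {e : ℝ // 0 ≤ e ∧ ∃ σ : Matching ι κ, IsEpsMatching sh K e A hA C hC σ},
    ENNReal.ofReal e.1

end Shift

end PersStab
namespace PersStab

/-! ### The poset `ℝᵒᵖ × ℝ` and blocks -/

/-- The poset `ℝᵒᵖ × ℝ`: `(a, b) ≤ (c, d)` iff `c ≤ a` and `b ≤ d`. -/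
structure RopR where
  x : ℝ
  y : ℝ

instance : Preorder RopR where
  le p q := q.x ≤ p.x ∧ p.y ≤ q.y
  le_refl p := ⟨le_rfl, le_rfl⟩
  le_trans p q r h₁ h₂ := ⟨h₂.1.trans h₁.1, h₁.2.trans h₂.2⟩

lemma RopR.le_def {p q : RopR} : p ≤ q ↔ q.x ≤ p.x ∧ p.y ≤ q.y := Iff.rfl

/-- The `ε`-shift on the poset `ℝᵒᵖ × ℝ`: `(a, b) ↦ (a - ε, b + ε)`. -/
def shf (ε : ℝ) (p : RopR) : RopR := ⟨p.x - ε, p.y + ε⟩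

/-- The block `(a,b)_BL = {(x,y) ∈ U : a < x, y < b}` (with `a`, `b` finite;
for infinite endpoints this shape is of type co, oc or c). -/
def blkO (a b : ℝ) : Set RopR := {p | p.x ≤ p.y ∧ a < p.x ∧ p.y < b}

/-- The blocks `[a,b)_BL = {(x,y) ∈ U : a ≤ y < b}` (for `s = a` finite) and
`(-∞,b)_BL = {(x,y) ∈ U : y < b}` (for `s = ⊥`). -/
def blkCO (s : EReal) (b : ℝ) : Set RopR := {p | p.x ≤ p.y ∧ s ≤ (p.y : EReal) ∧ p.y < b}

/-- The blocks `(a,b]_BL = {(x,y) ∈ U : a < x ≤ b}` (for `t = b` finite) and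
`(a,∞)_BL = {(x,y) ∈ U : a < x}` (for `t = ⊤`). -/
def blkOC (a : ℝ) (t : EReal) : Set RopR := {p | p.x ≤ p.y ∧ a < p.x ∧ (p.x : EReal) ≤ t}

/-- The closed blocks `{(x,y) ∈ U : x ≤ t, s ≤ y}`: this includes `[a,b]_BL`
(`s = a ≤ t = b` finite), `[b,a]_BL` (`t = a < s = b` finite), `[a,∞)_BL` (`t = ⊤`),
`(-∞,b]_BL` (`s = ⊥`) and `(-∞,∞)_BL = U`. -/
def blkC (s t : EReal) : Set RopR := {p | p.x ≤ p.y ∧ (p.x : EReal) ≤ t ∧ s ≤ (p.y : EReal)}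

/-- The four types of blocks. -/
inductive BlockType : Type
  | o | co | oc | c
deriving DecidableEq

/-- The blocks of each type. -/
def IsBlockOfType : BlockType → Set RopR → Prop
  | .o, J => ∃ a b : ℝ, a < b ∧ J = blkO a b
  | .co, J => ∃ (s : EReal) (b : ℝ), s ≠ ⊤ ∧ s < (b : EReal) ∧ J = blkCO s b
  | .oc, J => ∃ (a : ℝ) (t : EReal), t ≠ ⊥ ∧ (a : EReal) < t ∧ J = blkOC a t
  | .c, J => ∃ s t : EReal, s ≠ ⊤ ∧ t ≠ ⊥ ∧ J = blkC s t

/-- A block: an interval of `U ⊆ ℝᵒᵖ × ℝ` of one of the five standard shapes. -/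
def IsBlock (J : Set RopR) : Prop := ∃ τ, IsBlockOfType τ J

lemma blkO_convex (a b : ℝ) : IsConvexIn (blkO a b) := by
  rintro p q r ⟨hp1, hp2, hp3⟩ ⟨hr1, hr2, hr3⟩ ⟨hpq1, hpq2⟩ ⟨hqr1, hqr2⟩
  exact ⟨by linarith, by linarith, by linarith⟩

lemma blkCO_convex (s : EReal) (b : ℝ) : IsConvexIn (blkCO s b) := by
  rintro p q r ⟨hp1, hp2, hp3⟩ ⟨hr1, hr2, hr3⟩ ⟨hpq1, hpq2⟩ ⟨hqr1, hqr2⟩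
  refine ⟨by linarith, hp2.trans ?_, by linarith⟩
  exact_mod_cast hpq2

lemma blkOC_convex (a : ℝ) (t : EReal) : IsConvexIn (blkOC a t) := by
  rintro p q r ⟨hp1, hp2, hp3⟩ ⟨hr1, hr2, hr3⟩ ⟨hpq1, hpq2⟩ ⟨hqr1, hqr2⟩
  refine ⟨by linarith, by linarith, le_trans ?_ hp3⟩
  exact_mod_cast hpq1

lemma blkC_convex (s t : EReal) : IsConvexIn (blkC s t) := by
  rintro p q r ⟨hp1, hp2, hp3⟩ ⟨hr1, hr2, hr3⟩ ⟨hpq1, hpq2⟩ ⟨hqr1, hqr2⟩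
  refine ⟨by linarith, le_trans ?_ hp2, hp3.trans ?_⟩
  · exact_mod_cast hpq1
  · exact_mod_cast hpq2

lemma IsBlockOfType.convex {τ : BlockType} {J : Set RopR} (h : IsBlockOfType τ J) :
    IsConvexIn J := by
  cases τ with
  | o => obtain ⟨a, b, -, rfl⟩ := h; exact blkO_convex a b
  | co => obtain ⟨s, b, -, -, rfl⟩ := h; exact blkCO_convex s b
  | oc => obtain ⟨a, t, -, -, rfl⟩ := h; exact blkOC_convex a t
  | c => obtain ⟨s, t, -, -, rfl⟩ := h; exact blkC_convex s t

lemma IsBlock.convex {J : Set RopR} (h : IsBlock J) : IsConvexIn J :=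
  h.choose_spec.convex

end PersStab
namespace PersStab

/-!
A morphism between block decomposable modules is a matrix of morphisms `I^B → I^C` between
interval modules, and such a morphism vanishes at `p ∈ B ∩ C` as soon as some `q ≥ p` lies in
`C` but not in `B`: naturality along `p ≤ q` compares the zero map `I^B(p → q)` with the
identity `I^C(p → q)`. For the listed pairs of types such a `q` always exists: either `B` has an
open lower bound `a < x` while `C` is stable under decreasing `x`, or `B` has an open upper bound
`y < b` while `C` is stable under increasing `y`.
-/

variable {K : Type} [Field K] {P : Type} [Preorder P]

def EscapesInto (B C : Set P) : Prop :=
  ∀ ⦃p⦄, p ∈ B → p ∈ C → ∃ q, p ≤ q ∧ q ∉ B ∧ q ∈ C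

namespace DecompOver

variable {pred : Set P → Prop} {M : PersMod K P}

lemma map_symm_single_eq_zero (D : DecompOver pred M) [DecidableEq D.ι] {p q : P} (h : p ≤ q)
    {i : D.ι} (hq : q ∉ D.B i) (v : PLift (p ∈ D.B i) → K) :
    M.map h ((D.equiv p).symm (DFinsupp.single i v)) = 0 := by
  have hv : ivMap K (D.B i) p q v = 0 := funext fun hq' => absurd hq'.down hq
  rw [← (D.equiv q).map_eq_zero_iff, D.natural, LinearEquiv.apply_symm_apply,
    DFinsupp.mapRange.linearMap_apply, DFinsupp.mapRange_single, hv, DFinsupp.single_zero]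

lemma equiv_apply_eq_zero_of_map_eq_zero (D : DecompOver pred M) {p q : P} (h : p ≤ q)
    {j : D.ι} (hq : q ∈ D.B j) {m : M.V p} (hm : M.map h m = 0) (hp : PLift (p ∈ D.B j)) :
    D.equiv p m j hp = 0 := by
  have := congrFun (DFunLike.congr_fun (D.natural h m) j) ⟨hq⟩
  simpa [hm, ivMap, dif_pos hp.down] using this.symm

end DecompOver

theorem PersHom.app_eq_zero_of_escapesInto {pred pred' : Set P → Prop} {M N : PersMod K P}
    (DM : DecompOver pred M) (DN : DecompOver pred' N) (f : PersHom M N)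
    (hesc : ∀ i j, EscapesInto (DM.B i) (DN.B j)) (p : P) (m : M.V p) : f.app p m = 0 := by
  classical
  suffices h : (DN.equiv p).toLinearMap ∘ₗ f.app p ∘ₗ (DM.equiv p).symm.toLinearMap = 0 by
    simpa using LinearMap.congr_fun h (DM.equiv p m)
  refine DFinsupp.lhom_ext fun i v => DFinsupp.ext fun j => funext fun hj => ?_
  by_cases hpB : p ∈ DM.B i
  · obtain ⟨q, hpq, hqB, hqC⟩ := hesc i j hpB hj.down
    refine DN.equiv_apply_eq_zero_of_map_eq_zero hpq hqC ?_ hj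
    have hnat := LinearMap.congr_fun (f.natural hpq) ((DM.equiv p).symm (DFinsupp.single i v))
    rw [LinearMap.comp_apply, DM.map_symm_single_eq_zero hpq hqB, map_zero] at hnat
    simpa using hnat.symm
  · obtain rfl : v = 0 := funext fun hp => absurd hp.down hpB
    simp

namespace EscapesInto

variable {B C : Set RopR}

lemma of_lt_x {a : ℝ} (hB : ∀ q ∈ B, a < q.x)
    (hC : ∀ q ∈ C, ∀ x' ≤ q.x, (⟨x', q.y⟩ : RopR) ∈ C) : EscapesInto B C := by
  intro p _ hpC
  refine ⟨⟨min p.x a, p.y⟩, ⟨min_le_left _ _, le_rfl⟩, fun hq => ?_,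
    hC p hpC _ (min_le_left _ _)⟩
  exact (hB _ hq).not_ge (min_le_right _ _)

lemma of_y_lt {b : ℝ} (hB : ∀ q ∈ B, q.y < b)
    (hC : ∀ q ∈ C, ∀ y' ≥ q.y, (⟨q.x, y'⟩ : RopR) ∈ C) : EscapesInto B C := by
  intro p _ hpC
  refine ⟨⟨p.x, max p.y b⟩, ⟨le_rfl, le_max_left _ _⟩, fun hq => ?_,
    hC p hpC _ (le_max_left _ _)⟩
  exact (hB _ hq).not_ge (le_max_right _ _)

end EscapesInto

lemma blkCO_mk_of_le_x {s : EReal} {b : ℝ} :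
    ∀ q ∈ blkCO s b, ∀ x' ≤ q.x, (⟨x', q.y⟩ : RopR) ∈ blkCO s b :=
  fun _ hq _ hx' => ⟨hx'.trans hq.1, hq.2.1, hq.2.2⟩

lemma blkC_mk_of_le_x {s t : EReal} :
    ∀ q ∈ blkC s t, ∀ x' ≤ q.x, (⟨x', q.y⟩ : RopR) ∈ blkC s t :=
  fun _ hq _ hx' => ⟨hx'.trans hq.1, le_trans (by exact_mod_cast hx') hq.2.1, hq.2.2⟩

lemma blkOC_mk_of_y_le {a : ℝ} {t : EReal} :
    ∀ q ∈ blkOC a t, ∀ y' ≥ q.y, (⟨q.x, y'⟩ : RopR) ∈ blkOC a t :=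
  fun _ hq _ hy' => ⟨hq.1.trans hy', hq.2.1, hq.2.2⟩

lemma blkC_mk_of_y_le {s t : EReal} :
    ∀ q ∈ blkC s t, ∀ y' ≥ q.y, (⟨q.x, y'⟩ : RopR) ∈ blkC s t :=
  fun _ hq _ hy' => ⟨hq.1.trans hy', hq.2.1, hq.2.2.trans (by exact_mod_cast hy')⟩

lemma escapesInto_of_isBlockOfType {τ τ' : BlockType}
    (hpair : (τ, τ') ∈ ([(.o, .co), (.o, .oc), (.o, .c), (.co, .oc), (.co, .c),
      (.oc, .co), (.oc, .c)] : List (BlockType × BlockType)))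
    {B C : Set RopR} (hB : IsBlockOfType τ B) (hC : IsBlockOfType τ' C) : EscapesInto B C := by
  simp only [List.mem_cons, List.not_mem_nil, or_false, Prod.mk.injEq] at hpair
  rcases hpair with ⟨rfl, rfl⟩ | ⟨rfl, rfl⟩ | ⟨rfl, rfl⟩ | ⟨rfl, rfl⟩ | ⟨rfl, rfl⟩ |
    ⟨rfl, rfl⟩ | ⟨rfl, rfl⟩
  · obtain ⟨-, -, -, rfl⟩ := hB; obtain ⟨-, -, -, -, rfl⟩ := hC
    exact .of_lt_x (fun _ hq => hq.2.1) blkCO_mk_of_le_x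
  · obtain ⟨-, -, -, rfl⟩ := hB; obtain ⟨-, -, -, -, rfl⟩ := hC
    exact .of_y_lt (fun _ hq => hq.2.2) blkOC_mk_of_y_le
  · obtain ⟨-, -, -, rfl⟩ := hB; obtain ⟨-, -, -, -, rfl⟩ := hC
    exact .of_lt_x (fun _ hq => hq.2.1) blkC_mk_of_le_x
  · obtain ⟨-, -, -, -, rfl⟩ := hB; obtain ⟨-, -, -, -, rfl⟩ := hC
    exact .of_y_lt (fun _ hq => hq.2.2) blkOC_mk_of_y_le
  · obtain ⟨-, -, -, -, rfl⟩ := hB; obtain ⟨-, -, -, -, rfl⟩ := hC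
    exact .of_y_lt (fun _ hq => hq.2.2) blkC_mk_of_y_le
  · obtain ⟨-, -, -, -, rfl⟩ := hB; obtain ⟨-, -, -, -, rfl⟩ := hC
    exact .of_lt_x (fun _ hq => hq.2.1) blkCO_mk_of_le_x
  · obtain ⟨-, -, -, -, rfl⟩ := hB; obtain ⟨-, -, -, -, rfl⟩ := hC
    exact .of_lt_x (fun _ hq => hq.2.1) blkC_mk_of_le_x

/-- For block decomposable `ℝᵒᵖ × ℝ`-indexed modules, every morphism
`M^⋆ → N^†` is zero whenever
`(⋆,†) ∈ {(o,co), (o,oc), (o,c), (co,oc), (co,c), (oc,co), (oc,c)}`. -/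
theorem hom_between_types_is_zero
    (K : Type) [Field K] (τ τ' : BlockType)
    (hpair : (τ, τ') ∈ ([(.o, .co), (.o, .oc), (.o, .c), (.co, .oc), (.co, .c),
      (.oc, .co), (.oc, .c)] : List (BlockType × BlockType)))
    (M N : PersMod K RopR)
    (DM : DecompOver (IsBlockOfType τ) M) (DN : DecompOver (IsBlockOfType τ') N)
    (f : PersHom M N) :
    ∀ (p : RopR) (m : M.V p), f.app p m = 0 :=
  f.app_eq_zero_of_escapesInto DM DN fun i j =>
    escapesInto_of_isBlockOfType hpair (DM.mem i) (DN.mem j)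

end PersStab
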